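/- arXiv:1712.01659 — 4 statements merged into one kernel-verified Lean document; each statement's English description precedes it below -/
import Mathlib

section
/- Let v₁ = (r, d) and v₂ = (r, d + kr) in ℤ², where gcd(r,d) = 1, 0 < d, k > 0, and let n be the smallest positive integer with nd ≡ 1 mod r. Let w₁ = (rkn − 1, r²k) and w₂ = (−1, 0). Then det(v₁, v₂) = det(w₁, w₂) = kr², and v₁ ≡ (1 − rkn)·v₂ mod kr²·ℤ² if and only if w₁ ≡ (1 − rkn)·w₂ mod kr²·ℤ². Consequently there exists a matrix in SL₂(ℤ) sending the pair (v₁, v₂) to (w₁, w₂). -/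
/-- With `v₁ = (r,d)`, `v₂ = (r, d+kr)`, `w₁ = (rkn−1, r²k)`, `w₂ = (−1,0)`, where
`gcd(r,d) = 1`, `0 < d`, `0 < k`, and `n` is the smallest positive integer with
`nd ≡ 1 mod r`: both pairs have determinant `kr²`, the congruences
`v₁ ≡ (1−rkn)·v₂ mod kr²` and `w₁ ≡ (1−rkn)·w₂ mod kr²` are equivalent, and
there is a matrix in `SL₂(ℤ)` sending `(v₁,v₂)` to `(w₁,w₂)`. -/
theorem sl2_orbit_of_pairs (r d k n : ℕ)
    (hr : 0 < r) (hd : 0 < d) (hk : 0 < k)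
    (hcop : Nat.gcd r d = 1)
    (hn : 0 < n) (hn1 : (r : ℤ) ∣ ((n : ℤ) * d - 1))
    (hmin : ∀ n' : ℕ, 0 < n' → (r : ℤ) ∣ ((n' : ℤ) * d - 1) → n ≤ n') :
    let v₁ : Fin 2 → ℤ := ![(r : ℤ), (d : ℤ)]
    let v₂ : Fin 2 → ℤ := ![(r : ℤ), (d : ℤ) + (k : ℤ) * r]
    let w₁ : Fin 2 → ℤ := ![(r : ℤ) * k * n - 1, (r : ℤ) ^ 2 * k]
    let w₂ : Fin 2 → ℤ := ![-1, 0]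
    (v₁ 0 * v₂ 1 - v₁ 1 * v₂ 0 = (k : ℤ) * r ^ 2) ∧
    (w₁ 0 * w₂ 1 - w₁ 1 * w₂ 0 = (k : ℤ) * r ^ 2) ∧
    ((∀ i, ((k : ℤ) * r ^ 2) ∣ (v₁ i - (1 - (r : ℤ) * k * n) * v₂ i)) ↔
      (∀ i, ((k : ℤ) * r ^ 2) ∣ (w₁ i - (1 - (r : ℤ) * k * n) * w₂ i))) ∧
    (∃ g : Matrix.SpecialLinearGroup (Fin 2) ℤ,
      (g : Matrix (Fin 2) (Fin 2) ℤ).mulVec v₁ = w₁ ∧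
      (g : Matrix (Fin 2) (Fin 2) ℤ).mulVec v₂ = w₂) := by
  intro v₁ v₂ w₁ w₂
  obtain ⟨m, hm⟩ := hn1
  refine ⟨by simp [v₁, v₂]; ring, by simp [w₁, w₂]; ring, ?_, ?_⟩
  · constructor
    · intro _ i
      fin_cases i
      · exact ⟨0, by simp [w₁, w₂]⟩
      · exact ⟨1, by simp [w₁, w₂]; ring⟩
    · intro _ i
      fin_cases i
      · exact ⟨n, by simp [v₁, v₂]; ring⟩
      · refine ⟨m + k * n, ?_⟩
        show ((d : ℤ)) - (1 - (r : ℤ) * k * n) * ((d : ℤ) + k * r) = k * r ^ 2 * (m + k * n)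
        linear_combination ((k : ℤ) * r) * hm
  · have hdet : ((k : ℤ) * n + m) * (-(r : ℤ)) - (-(n : ℤ)) * ((r : ℤ) * k + d) = 1 := by
      nlinarith [hm]
    refine ⟨⟨!![(k : ℤ) * n + m, -(n : ℤ); (r : ℤ) * k + d, -(r : ℤ)], by
      simp [Matrix.det_fin_two_of]; linarith [hdet]⟩, ?_, ?_⟩
    · funext i
      fin_cases i <;>
        simp [Matrix.mulVec, dotProduct, Fin.sum_univ_two, v₁, w₁] <;>
        nlinarith [hm]
    · funext i
      fin_cases i <;>
        simp [Matrix.mulVec, dotProduct, Fin.sum_univ_two, v₂, w₂] <;>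
        nlinarith [hm]
end

section
/- Two pairs of vectors (v₁, v₂) and (w₁, w₂) in ℤ², each pair consisting of primitive vectors, with det(v₁,v₂) = det(w₁,w₂) = N > 0 and v₁ ≡ α v₂ mod N, w₁ ≡ α w₂ mod N for the same unit α ∈ (ℤ/N)^×, lie in the same SL₂(ℤ)-orbit (acting simultaneously on both vectors of the pair). -/
/-!
With `V = (v₁ | v₂)` and `W = (w₁ | w₂)`, the only candidate is `g = W · adj V / N`, because
`adj V · V = N`. It is integral: modulo `N` the matrix `W` is `w₂ · (α, 1)`, and the row
`(α, 1) · adj V = (α v₂₁ - v₁₁, v₁₀ - α v₂₀)` vanishes modulo `N`. Finally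
`det g · N = det W = N` forces `det g = 1`.
-/

open Matrix

theorem Matrix.exists_specialLinearGroup_mul_eq {n R : Type*} [Fintype n] [DecidableEq n]
    [CommRing R] [IsDomain R] {V W : Matrix n n R} (hdet : W.det = V.det) (h0 : V.det ≠ 0)
    (hdvd : ∀ i j, V.det ∣ (W * V.adjugate) i j) :
    ∃ g : SpecialLinearGroup n R, (g : Matrix n n R) * V = W := by
  choose G hG using hdvd
  have hWG : W * V.adjugate = V.det • of G := by ext i j; exact hG i j
  have hGV : of G * V = W := by
    apply smul_right_injective _ h0
    calc V.det • (of G * V) = W * V.adjugate * V := by rw [hWG, smul_mul]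
      _ = V.det • W := by rw [Matrix.mul_assoc, adjugate_mul, Matrix.mul_smul, Matrix.mul_one]
  have hGdet : (of G).det = 1 := by
    apply mul_right_cancel₀ h0
    rw [← det_mul, hGV, hdet, one_mul]
  exact ⟨⟨of G, hGdet⟩, hGV⟩

theorem Matrix.mul_transpose_of {ι m n R : Type*} [Fintype n] [NonUnitalNonAssocSemiring R]
    (M : Matrix m n R) (v : ι → n → R) : M * (of v)ᵀ = (of fun j => M *ᵥ v j)ᵀ := by
  ext i j
  rfl

theorem dvd_mul_sub_mul_of_dvd_sub_mul {R : Type*} [CommRing R] {N α a₁ a₂ b₁ b₂ : R}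
    (ha : N ∣ a₁ - α * a₂) (hb : N ∣ b₁ - α * b₂) : N ∣ a₁ * b₂ - a₂ * b₁ := by
  have h := dvd_sub (ha.mul_right b₂) (hb.mul_left a₂)
  convert h using 1
  ring

theorem dvd_mul_adjugate_of_dvd_sub_mul {R : Type*} [CommRing R] {N α : R}
    {v₁ v₂ w₁ w₂ : Fin 2 → R} (hv : ∀ i, N ∣ v₁ i - α * v₂ i) (hw : ∀ i, N ∣ w₁ i - α * w₂ i)
    (i j : Fin 2) : N ∣ ((of ![w₁, w₂])ᵀ * (of ![v₁, v₂])ᵀ.adjugate) i j := by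
  fin_cases j <;>
    simp only [adjugate_fin_two, mul_apply, Fin.sum_univ_two, transpose_apply, of_apply,
      cons_val_zero, cons_val_one, Fin.zero_eta, Fin.mk_one, mul_neg]
  · rw [← sub_eq_add_neg]
    exact dvd_mul_sub_mul_of_dvd_sub_mul (hw i) (hv 1)
  · rw [neg_add_eq_sub, ← neg_sub, dvd_neg]
    exact dvd_mul_sub_mul_of_dvd_sub_mul (hw i) (hv 0)

theorem sl2_orbit_of_invariants_general (v₁ v₂ w₁ w₂ : Fin 2 → ℤ) (N : ℤ) (hN : 0 < N)
    (hdv : v₁ 0 * v₂ 1 - v₁ 1 * v₂ 0 = N)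
    (hdw : w₁ 0 * w₂ 1 - w₁ 1 * w₂ 0 = N)
    (α : ℤ)
    (hv : ∀ i, N ∣ (v₁ i - α * v₂ i))
    (hw : ∀ i, N ∣ (w₁ i - α * w₂ i)) :
    ∃ g : Matrix.SpecialLinearGroup (Fin 2) ℤ,
      (g : Matrix (Fin 2) (Fin 2) ℤ).mulVec v₁ = w₁ ∧
      (g : Matrix (Fin 2) (Fin 2) ℤ).mulVec v₂ = w₂ := by
  have hV : (of ![v₁, v₂])ᵀ.det = N := by simpa [det_fin_two] using hdv
  have hW : (of ![w₁, w₂])ᵀ.det = N := by simpa [det_fin_two] using hdw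
  obtain ⟨g, hg⟩ := exists_specialLinearGroup_mul_eq (hW.trans hV.symm) (hV ▸ hN.ne')
    (hV ▸ dvd_mul_adjugate_of_dvd_sub_mul hv hw)
  rw [mul_transpose_of, transpose_inj] at hg
  exact ⟨g, congr_fun hg 0, congr_fun hg 1⟩

/-- Two pairs of primitive vectors in `ℤ²` with the same determinant `N > 0` and the
same congruence invariant `α ∈ (ℤ/N)ˣ` (i.e. `v₁ ≡ α·v₂` and `w₁ ≡ α·w₂ mod N`)
lie in the same `SL₂(ℤ)`-orbit for the diagonal action on pairs. -/
theorem sl2_orbit_of_invariants (v₁ v₂ w₁ w₂ : Fin 2 → ℤ) (N : ℤ) (hN : 0 < N)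
    (hv₁ : IsCoprime (v₁ 0) (v₁ 1)) (hv₂ : IsCoprime (v₂ 0) (v₂ 1))
    (hw₁ : IsCoprime (w₁ 0) (w₁ 1)) (hw₂ : IsCoprime (w₂ 0) (w₂ 1))
    (hdv : v₁ 0 * v₂ 1 - v₁ 1 * v₂ 0 = N)
    (hdw : w₁ 0 * w₂ 1 - w₁ 1 * w₂ 0 = N)
    (α : ℤ) (hα : IsCoprime α N)
    (hv : ∀ i, N ∣ (v₁ i - α * v₂ i))
    (hw : ∀ i, N ∣ (w₁ i - α * w₂ i)) :
    ∃ g : Matrix.SpecialLinearGroup (Fin 2) ℤ,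
      (g : Matrix (Fin 2) (Fin 2) ℤ).mulVec v₁ = w₁ ∧
      (g : Matrix (Fin 2) (Fin 2) ℤ).mulVec v₂ = w₂ :=
  sl2_orbit_of_invariants_general v₁ v₂ w₁ w₂ N hN hdv hdw α hv hw
end

section
/- Let F: G → H be a surjective morphism of set-valued deformation functors on local Artin ℂ-algebras, where G and H admit miniversal families and the tangent map t_G → t_H is surjective. If G is unobstructed (i.e., G(A′) → G(A) is surjective for every small extension A′ → A), then H is unobstructed and F is strongly surjective (G(B) → G(A) ×_{H(A)} H(B) is surjective for every small extension B → A). -/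
/-!
Unobstructedness passes to `H` because `F` is surjective: lift an element of `H(A)` to `G(A)`,
lift that along the small extension, and push it back to `H`. For strong surjectivity, lift
`a ∈ G(A)` to some `g₀ ∈ G(B)`; then `F(g₀)` and `b` lie in the same fibre over `H(A)`, so they
differ by a tangent vector of `H`, which lifts to a tangent vector of `G`; moving `g₀` by it stays
over `a` and, by equivariance, lands on `b`.
-/

open CategoryTheory

namespace CategoryTheory.NatTrans

variable {C : Type*} [Category C] {G H : C ⥤ Type} (F : G ⟶ H)

theorem map_surjective_of_app_surjective {A' A : C} (p : A' ⟶ A)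
    (hF : Function.Surjective (F.app A)) (hG : Function.Surjective (G.map p)) :
    Function.Surjective (H.map p) := by
  have hcomm : H.map p ∘ F.app A' = F.app A ∘ G.map p :=
    funext fun ξ => (naturality_apply F p ξ).symm
  exact Function.Surjective.of_comp (hcomm ▸ hF.comp hG)

theorem exists_lift_of_fiber_transitive {T_G T_H : Type*} (tangent : T_G → T_H)
    (tangent_surj : Function.Surjective tangent) {B A : C} (p : B ⟶ A)
    (actG : T_G → G.obj B → G.obj B) (actH : T_H → H.obj B → H.obj B)
    (actG_fiber : ∀ v ξ, G.map p (actG v ξ) = G.map p ξ)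
    (actH_trans : ∀ ξ η, H.map p ξ = H.map p η → ∃ v, actH v ξ = η)
    (equivariant : ∀ v ξ, F.app B (actG v ξ) = actH (tangent v) (F.app B ξ))
    (hG : Function.Surjective (G.map p)) (a : G.obj A) (b : H.obj B)
    (hb : H.map p b = F.app A a) :
    ∃ g : G.obj B, G.map p g = a ∧ F.app B g = b := by
  obtain ⟨g₀, rfl⟩ := hG a
  obtain ⟨v, hv⟩ := actH_trans (F.app B g₀) b (by rw [hb, naturality_apply])
  obtain ⟨w, rfl⟩ := tangent_surj v
  exact ⟨actG w g₀, actG_fiber w g₀, (equivariant w g₀).trans hv⟩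

end CategoryTheory.NatTrans

open NatTrans in
theorem deformation_sublemma_general
    {C : Type*} [Category C] (SE : MorphismProperty C) (Dual : C)
    (G H : C ⥤ Type) (F : G ⟶ H)
    -- miniversality: the tangent space acts on fibers of small extensions, transitively
    (actG : ∀ {A' A : C} (p : A' ⟶ A), SE p → G.obj Dual → G.obj A' → G.obj A')
    (actH : ∀ {A' A : C} (p : A' ⟶ A), SE p → H.obj Dual → H.obj A' → H.obj A')
    (actG_fiber : ∀ {A' A : C} (p : A' ⟶ A) (hp : SE p) (v : G.obj Dual) (ξ : G.obj A'),
      G.map p (actG p hp v ξ) = G.map p ξ)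
    (actH_trans : ∀ {A' A : C} (p : A' ⟶ A) (hp : SE p) (ξ η : H.obj A'),
      H.map p ξ = H.map p η → ∃ v, actH p hp v ξ = η)
    (F_equivariant : ∀ {A' A : C} (p : A' ⟶ A) (hp : SE p) (v : G.obj Dual) (ξ : G.obj A'),
      F.app A' (actG p hp v ξ) = actH p hp (F.app Dual v) (F.app A' ξ))
    -- `F` is surjective
    (F_surj : ∀ A : C, Function.Surjective (F.app A))
    -- the tangent map `t_G → t_H` is surjective
    (tangent_surj : Function.Surjective (F.app Dual))
    -- `G` is unobstructed
    (G_unobstructed : ∀ {A' A : C} (p : A' ⟶ A), SE p → Function.Surjective (G.map p)) :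
    -- `H` is unobstructed
    (∀ {A' A : C} (p : A' ⟶ A), SE p → Function.Surjective (H.map p)) ∧
    -- `F` is strongly surjective
    (∀ {B A : C} (p : B ⟶ A), SE p → ∀ (a : G.obj A) (b : H.obj B),
      H.map p b = F.app A a → ∃ g : G.obj B, G.map p g = a ∧ F.app B g = b) :=
  ⟨fun p hp => map_surjective_of_app_surjective F p (F_surj _) (G_unobstructed p hp),
    fun p hp => exists_lift_of_fiber_transitive F _ tangent_surj p (actG p hp) (actH p hp)
      (actG_fiber p hp) (actH_trans p hp) (F_equivariant p hp) (G_unobstructed p hp)⟩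

/-- Abstract form of the deformation-theory sublemma: `G`, `H` are set-valued deformation
functors on (a category `C` of) local Artin ℂ-algebras, `SE` is the class of small
extensions, `Dual` is the ring of dual numbers so that `G.obj Dual`, `H.obj Dual` are the
tangent spaces, miniversality is encoded by transitive tangent-space actions on the fibers
of restriction along small extensions, and `F : G ⟶ H` is a surjective morphism with
surjective tangent map. If `G` is unobstructed, then `H` is unobstructed and `F` is
strongly surjective: `G(B) → G(A) ×_{H(A)} H(B)` is surjective for every small extension
`B → A`. -/
theorem deformation_sublemma
    {C : Type*} [Category C] (SE : MorphismProperty C) (Dual : C)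
    (G H : C ⥤ Type) (F : G ⟶ H)
    -- miniversality: the tangent space acts on fibers of small extensions, transitively
    (actG : ∀ {A' A : C} (p : A' ⟶ A), SE p → G.obj Dual → G.obj A' → G.obj A')
    (actH : ∀ {A' A : C} (p : A' ⟶ A), SE p → H.obj Dual → H.obj A' → H.obj A')
    (actG_fiber : ∀ {A' A : C} (p : A' ⟶ A) (hp : SE p) (v : G.obj Dual) (ξ : G.obj A'),
      G.map p (actG p hp v ξ) = G.map p ξ)
    (actG_trans : ∀ {A' A : C} (p : A' ⟶ A) (hp : SE p) (ξ η : G.obj A'),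
      G.map p ξ = G.map p η → ∃ v, actG p hp v ξ = η)
    (actH_fiber : ∀ {A' A : C} (p : A' ⟶ A) (hp : SE p) (v : H.obj Dual) (ξ : H.obj A'),
      H.map p (actH p hp v ξ) = H.map p ξ)
    (actH_trans : ∀ {A' A : C} (p : A' ⟶ A) (hp : SE p) (ξ η : H.obj A'),
      H.map p ξ = H.map p η → ∃ v, actH p hp v ξ = η)
    (F_equivariant : ∀ {A' A : C} (p : A' ⟶ A) (hp : SE p) (v : G.obj Dual) (ξ : G.obj A'),
      F.app A' (actG p hp v ξ) = actH p hp (F.app Dual v) (F.app A' ξ))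
    -- `F` is surjective
    (F_surj : ∀ A : C, Function.Surjective (F.app A))
    -- the tangent map `t_G → t_H` is surjective
    (tangent_surj : Function.Surjective (F.app Dual))
    -- `G` is unobstructed
    (G_unobstructed : ∀ {A' A : C} (p : A' ⟶ A), SE p → Function.Surjective (G.map p)) :
    -- `H` is unobstructed
    (∀ {A' A : C} (p : A' ⟶ A), SE p → Function.Surjective (H.map p)) ∧
    -- `F` is strongly surjective
    (∀ {B A : C} (p : B ⟶ A), SE p → ∀ (a : G.obj A) (b : H.obj B),
      H.map p b = F.app A a → ∃ g : G.obj B, G.map p g = a ∧ F.app B g = b) :=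
  deformation_sublemma_general SE Dual G H F actG actH actG_fiber actH_trans F_equivariant F_surj
    tangent_surj G_unobstructed
end

section
/- Let E be a rank-2 vector bundle on a curve fitting in an exact sequence 0 → O → E → L → 0 with L = det E, and suppose there are injective bundle maps f: E → L ⊕ L(D) and g: L ⊕ L(D) → E(2D) such that coker(f) and coker(g) are torsion with disjoint supports. If φ = g∘f factors as E → E(D) → E(2D) with the first map's cokernel isomorphic to coker(f) and the second map's cokernel isomorphic to coker(g), then E(D) ≅ L ⊕ L(D). In particular, if E(D) is indecomposable (e.g., E stable of odd degree), no such factorization exists. -/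
open CategoryTheory CategoryTheory.Limits

/-- Non-surjectivity of the product map: let `E` be a rank-2 bundle fitting in an exact
sequence `0 → O → E → L → 0` with `L = det E`, and let `f : E → L ⊕ L(D)` and
`g : L ⊕ L(D) → E(2D)` be injective maps whose (torsion) cokernels have disjoint supports
(so that there are no nonzero morphisms between them in either direction).  If
`φ = g ∘ f` factors as `E → E(D) → E(2D)` through monomorphisms with cokernels isomorphic
to `coker f` and `coker g` respectively, then `E(D) ≅ L ⊕ L(D)`.  In particular, if
`E(D)` is indecomposable (e.g. `E` stable of odd degree) no such factorization exists.
Here `Coh` is (a category modelling) coherent sheaves on the curve. -/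
theorem no_factorization_through_ED
    {Coh : Type*} [Category Coh] [Abelian Coh]
    (O E L LD ED E2D : Coh)             -- `O`, `E`, `L`, `L(D)`, `E(D)`, `E(2D)`
    -- the exact sequence `0 → O → E → L → 0`
    (ι : O ⟶ E) (p : E ⟶ L) (hι : Mono ι) (hp : Epi p) (w : ι ≫ p = 0)
    (hses : Nonempty (IsColimit (CokernelCofork.ofπ p w)))
    (f : E ⟶ L ⊞ LD) (g : L ⊞ LD ⟶ E2D) (hf : Mono f) (hg : Mono g)
    -- the torsion cokernels have disjoint supports: no nonzero maps either way
    (hdisj₁ : ∀ h : cokernel f ⟶ cokernel g, h = 0)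
    (hdisj₂ : ∀ h : cokernel g ⟶ cokernel f, h = 0) :
    (∀ (f' : E ⟶ ED) (g' : ED ⟶ E2D), Mono f' → Mono g' → f' ≫ g' = f ≫ g →
      Nonempty (cokernel f' ≅ cokernel f) → Nonempty (cokernel g' ≅ cokernel g) →
      Nonempty (ED ≅ L ⊞ LD)) ∧
    (¬ Nonempty (ED ≅ L ⊞ LD) →
      ¬ ∃ (f' : E ⟶ ED) (g' : ED ⟶ E2D), Mono f' ∧ Mono g' ∧ f' ≫ g' = f ≫ g ∧
        Nonempty (cokernel f' ≅ cokernel f) ∧ Nonempty (cokernel g' ≅ cokernel g)) := by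
  have key : ∀ (f' : E ⟶ ED) (g' : ED ⟶ E2D), Mono f' → Mono g' → f' ≫ g' = f ≫ g →
      Nonempty (cokernel f' ≅ cokernel f) → Nonempty (cokernel g' ≅ cokernel g) →
      Nonempty (ED ≅ L ⊞ LD) := by
    intro f' g' hf' hg' hfg ⟨e₁⟩ ⟨e₂⟩
    -- Step 1: `g` factors through `g'`.
    have hz1 : g ≫ cokernel.π g' = 0 := by
      have hcond : f ≫ g ≫ cokernel.π g' = 0 := by
        rw [← Category.assoc, ← hfg, Category.assoc, cokernel.condition, Limits.comp_zero]
      have hdesc := cokernel.π_desc f (g ≫ cokernel.π g') hcond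
      have h0 : cokernel.desc f (g ≫ cokernel.π g') hcond = 0 := by
        have hh := hdisj₁ (cokernel.desc f (g ≫ cokernel.π g') hcond ≫ e₂.hom)
        calc cokernel.desc f (g ≫ cokernel.π g') hcond
            = (cokernel.desc f (g ≫ cokernel.π g') hcond ≫ e₂.hom) ≫ e₂.inv := by
              rw [Category.assoc, e₂.hom_inv_id, Category.comp_id]
          _ = 0 := by rw [hh, Limits.zero_comp]
      rw [← hdesc, h0, Limits.comp_zero]
    obtain ⟨u, hu⟩ := KernelFork.IsLimit.lift'
      (Abelian.monoIsKernelOfCokernel _ (cokernelIsCokernel g')) g hz1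
    -- Step 2: `g'` factors through `g`.
    have hz2 : g' ≫ cokernel.π g = 0 := by
      have hcond : f' ≫ g' ≫ cokernel.π g = 0 := by
        rw [← Category.assoc, hfg, Category.assoc, cokernel.condition, Limits.comp_zero]
      have hdesc := cokernel.π_desc f' (g' ≫ cokernel.π g) hcond
      have h0 : cokernel.desc f' (g' ≫ cokernel.π g) hcond = 0 := by
        have hh := hdisj₁ (e₁.inv ≫ cokernel.desc f' (g' ≫ cokernel.π g) hcond)
        calc cokernel.desc f' (g' ≫ cokernel.π g) hcond
            = e₁.hom ≫ e₁.inv ≫ cokernel.desc f' (g' ≫ cokernel.π g) hcond := by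
              rw [← Category.assoc, e₁.hom_inv_id, Category.id_comp]
          _ = 0 := by rw [hh, Limits.comp_zero]
      rw [← hdesc, h0, Limits.comp_zero]
    obtain ⟨v, hv⟩ := KernelFork.IsLimit.lift'
      (Abelian.monoIsKernelOfCokernel _ (cokernelIsCokernel g)) g' hz2
    simp only [Fork.ι_ofι] at hu hv
    refine ⟨⟨v, u, ?_, ?_⟩⟩
    · have h : (v ≫ u) ≫ g' = 𝟙 ED ≫ g' := by
        rw [Category.assoc, hu, hv, Category.id_comp]
      exact Mono.right_cancellation _ _ h
    · have h : (u ≫ v) ≫ g = 𝟙 (L ⊞ LD) ≫ g := by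
        rw [Category.assoc, hv, hu, Category.id_comp]
      exact Mono.right_cancellation _ _ h
  refine ⟨key, ?_⟩
  rintro hne ⟨f', g', hf', hg', hfg, h1, h2⟩
  exact hne (key f' g' hf' hg' hfg h1 h2)
end
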